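/- arXiv:1401.7970 — 5 statements merged into one kernel-verified Lean document; each statement's English description precedes it below -/
import Mathlib

section
/- Let n ≥ 2 and let G be the directed path v₁ → v₂ → ⋯ → v_n in which every edge has weight 1/(n+1), and fix every threshold θ_v = 2/(n+1). In the linear influence model with these fixed thresholds, the fractional influence vector x with x_{v₁} = 2/(n+1) and x_{v_i} = 1/(n+1) for 2 ≤ i ≤ n (so that ‖x‖₁ = 1) activates every vertex: the final activated set S_n^θ equals V. -/
open Finset
open scoped Classical

/-- The final activated set of the (deterministic) linear influence process on a
weighted digraph with weights `wt`, thresholds `θ` and direct influences `x`: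
starting from `∅`, a vertex `v` activates once the total weight of edges from the
active set into `v` plus `x v` reaches `θ v`; the process runs for `|W|` rounds. -/
noncomputable def finalSet {W : Type*} [Fintype W] (wt : W → W → ℝ) (θ x : W → ℝ) :
    Finset W :=
  (fun S => S ∪ Finset.univ.filter (fun v => θ v ≤ (∑ u ∈ S, wt u v) + x v))^[Fintype.card W] ∅

/-!
Seeding `v₁` with the full threshold activates it in the first round; every later vertex
receives half its threshold directly and the other half along the edge from its predecessor,
so `v_{i+1}` activates one round after `v_i`, and after `n` rounds the whole path is active.
-/

section ActivationProcess

variable {W : Type*} [Fintype W] (wt : W → W → ℝ) (θ x : W → ℝ)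

noncomputable def activationStep (S : Finset W) : Finset W :=
  S ∪ univ.filter (fun v => θ v ≤ (∑ u ∈ S, wt u v) + x v)

theorem finalSet_eq_iterate_activationStep :
    finalSet wt θ x = (activationStep wt θ x)^[Fintype.card W] ∅ :=
  rfl

theorem subset_activationStep (S : Finset W) : S ⊆ activationStep wt θ x S :=
  subset_union_left

variable {wt θ x}

theorem mem_activationStep_of_le_sum (hwt : ∀ u v, 0 ≤ wt u v) {S T : Finset W} {v : W}
    (hTS : T ⊆ S) (h : θ v ≤ (∑ u ∈ T, wt u v) + x v) : v ∈ activationStep wt θ x S := by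
  have hsum : ∑ u ∈ T, wt u v ≤ ∑ u ∈ S, wt u v :=
    sum_le_sum_of_subset_of_nonneg hTS fun u _ _ => hwt u v
  exact mem_union_right _ (mem_filter.mpr ⟨mem_univ v, by linarith⟩)

theorem monotone_iterate_activationStep :
    Monotone fun k => (activationStep wt θ x)^[k] ∅ :=
  monotone_nat_of_le_succ fun k => by
    rw [Function.iterate_succ_apply']
    exact subset_activationStep wt θ x _

theorem mem_finalSet_of_mem_iterate {k : ℕ} {v : W} (hk : k ≤ Fintype.card W)
    (hv : v ∈ (activationStep wt θ x)^[k] ∅) : v ∈ finalSet wt θ x := by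
  rw [finalSet_eq_iterate_activationStep]
  exact monotone_iterate_activationStep hk hv

theorem mem_iterate_activationStep_of_walk (hwt : ∀ u v, 0 ≤ wt u v) {m : ℕ} (p : Fin m → W)
    (hstart : ∀ i : Fin m, (i : ℕ) = 0 → θ (p i) ≤ x (p i))
    (hstep : ∀ i j : Fin m, (i : ℕ) + 1 = j → θ (p j) ≤ wt (p i) (p j) + x (p j)) :
    ∀ i : Fin m, p i ∈ (activationStep wt θ x)^[(i : ℕ) + 1] ∅ := by
  rintro ⟨i, hi⟩
  induction i with
  | zero =>
    exact mem_activationStep_of_le_sum hwt (empty_subset _)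
      (by simpa using hstart ⟨0, hi⟩ rfl)
  | succ i ih =>
    have hprev := ih (by omega)
    rw [Function.iterate_succ_apply']
    exact mem_activationStep_of_le_sum hwt (singleton_subset_iff.mpr hprev)
      (by simpa using hstep ⟨i, by omega⟩ ⟨i + 1, hi⟩ rfl)

theorem finalSet_eq_univ_of_walk (hwt : ∀ u v, 0 ≤ wt u v) {m : ℕ} (hm : m ≤ Fintype.card W)
    (p : Fin m → W) (hp : Function.Surjective p)
    (hstart : ∀ i : Fin m, (i : ℕ) = 0 → θ (p i) ≤ x (p i))
    (hstep : ∀ i j : Fin m, (i : ℕ) + 1 = j → θ (p j) ≤ wt (p i) (p j) + x (p j)) :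
    finalSet wt θ x = univ := by
  refine eq_univ_iff_forall.mpr fun v => ?_
  obtain ⟨i, rfl⟩ := hp v
  exact mem_finalSet_of_mem_iterate (i.isLt.trans_le hm)
    (mem_iterate_activationStep_of_walk hwt p hstart hstep i)

end ActivationProcess

theorem sum_pathSeed_eq_one (n : ℕ) (hn : 0 < n) :
    (∑ v : Fin n, if (v : ℕ) = 0 then 2 / ((n : ℝ) + 1) else 1 / (n + 1)) = 1 := by
  obtain ⟨m, rfl⟩ : ∃ m, n = m + 1 := ⟨n - 1, by omega⟩
  rw [Fin.sum_univ_succ]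
  simp only [Fin.val_zero, Fin.val_succ, if_true, Nat.succ_ne_zero, if_false,
    sum_const, card_univ, Fintype.card_fin, nsmul_eq_mul]
  push_cast
  field_simp
  ring

/-- On the directed path `v₁ → ⋯ → v_n` with edge weights `1/(n+1)` and all fixed
thresholds `2/(n+1)`, the fractional influence vector giving `2/(n+1)` to `v₁` and
`1/(n+1)` to every other vertex has total budget `1` and activates every vertex. -/
theorem stmt5 (n : ℕ) (hn : 2 ≤ n) :
    let wt : Fin n → Fin n → ℝ := fun u v => if (u : ℕ) + 1 = (v : ℕ) then 1 / (n + 1) else 0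
    let θ : Fin n → ℝ := fun _ => 2 / (n + 1)
    let x : Fin n → ℝ := fun v => if (v : ℕ) = 0 then 2 / (n + 1) else 1 / (n + 1)
    (∑ v, x v) = 1 ∧ finalSet wt θ x = Finset.univ := by
  intro wt θ x
  refine ⟨sum_pathSeed_eq_one n (by omega), ?_⟩
  have hwt : ∀ u v, 0 ≤ wt u v := fun u v => by dsimp only [wt]; split_ifs <;> positivity
  refine finalSet_eq_univ_of_walk hwt (Fintype.card_fin n).ge id Function.surjective_id
    (fun i hi => by simp [θ, x, hi]) (fun i j hij => ?_)
  have hj : (j : ℕ) ≠ 0 := by omega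
  simp only [θ, x, wt, id, hij, if_true, hj, if_false]
  exact (by ring : (2 : ℝ) / (n + 1) = 1 / (n + 1) + 1 / (n + 1)).le
end

section
/- Let n ≥ 2 and let G be the directed path v₁ → v₂ → ⋯ → v_n in which every edge has weight 1/(n+1), and fix every threshold θ_v = 2/(n+1). In the linear influence model with these fixed thresholds, for every integral influence vector x ∈ {0,1}^V the final activated set S_n^θ equals exactly {v : x_v = 1}; in particular, with budget 1 an integral solution activates at most one vertex, while some fractional vector with ‖x‖₁ = 1 activates all n vertices. -/
open Finset
open scoped Classical

lemma sum_wt_le (n : ℕ) (S : Finset (Fin n)) (v : Fin n) :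
    ∑ u ∈ S, (if (u : ℕ) + 1 = (v : ℕ) then (1 : ℝ) / (n + 1) else 0) ≤ 1 / (n + 1) := by
  by_cases h : ∃ u ∈ S, (u : ℕ) + 1 = (v : ℕ)
  · obtain ⟨u0, hu0, hu0v⟩ := h
    rw [Finset.sum_eq_single_of_mem u0 hu0, if_pos hu0v]
    intro b hb hbne
    rw [if_neg]
    intro hbv
    exact hbne (Fin.ext (by omega))
  · push_neg at h
    rw [Finset.sum_eq_zero (fun u hu => if_neg (h u hu))]
    positivity

lemma finalSet_eq_of_fixed {W : Type*} [Fintype W] (wt : W → W → ℝ) (θ x : W → ℝ)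
    (R : Finset W) (hc : Fintype.card W ≠ 0)
    (h1 : (∅ : Finset W) ∪ univ.filter (fun v => θ v ≤ (∑ u ∈ (∅ : Finset W), wt u v) + x v) = R)
    (h2 : R ∪ univ.filter (fun v => θ v ≤ (∑ u ∈ R, wt u v) + x v) = R) :
    finalSet wt θ x = R := by
  obtain ⟨m, hm⟩ := Nat.exists_eq_succ_of_ne_zero hc
  rw [finalSet, hm, Function.iterate_succ_apply, h1]
  refine Function.iterate_fixed ?_ m
  exact h2

lemma finalSet_eq_univ_of_level {W : Type*} [Fintype W] (wt : W → W → ℝ) (θ x : W → ℝ)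
    (lvl : W → ℕ) (hlvl : ∀ v, lvl v < Fintype.card W)
    (h : ∀ (S : Finset W) (v : W), (∀ u, lvl u < lvl v → u ∈ S) →
      θ v ≤ (∑ u ∈ S, wt u v) + x v) :
    finalSet wt θ x = univ := by
  suffices H : ∀ k : ℕ, ∀ v : W, lvl v < k →
      v ∈ (fun S => S ∪ Finset.univ.filter
        (fun v => θ v ≤ (∑ u ∈ S, wt u v) + x v))^[k] ∅ by
    rw [Finset.eq_univ_iff_forall]
    intro v
    rw [finalSet]
    exact H _ v (hlvl v)
  intro k
  induction k with
  | zero => intro v hv; omega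
  | succ k ih =>
    intro v hv
    rw [Function.iterate_succ_apply']
    by_cases hvk : lvl v < k
    · exact Finset.mem_union_left _ (ih v hvk)
    · apply Finset.mem_union_right
      simp only [Finset.mem_filter, Finset.mem_univ, true_and]
      exact h _ v (fun u hu => ih u (by omega))

/-- On the directed path `v₁ → ⋯ → v_n` with edge weights `1/(n+1)` and all fixed
thresholds `2/(n+1)`: every integral influence vector activates exactly the vertices
it directly influences; in particular an integral vector of budget `1` activates at
most one vertex, while some fractional vector of budget `1` activates all `n`. -/
theorem stmt6 (n : ℕ) (hn : 2 ≤ n) (x : Fin n → ℝ) (hx : ∀ v, x v = 0 ∨ x v = 1) :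
    let wt : Fin n → Fin n → ℝ := fun u v => if (u : ℕ) + 1 = (v : ℕ) then 1 / (n + 1) else 0
    let θ : Fin n → ℝ := fun _ => 2 / (n + 1)
    finalSet wt θ x = Finset.univ.filter (fun v => x v = 1) ∧
    ((∑ v, x v) ≤ 1 → (finalSet wt θ x).card ≤ 1) ∧
    (∃ x' : Fin n → ℝ, (∀ v, x' v ∈ Set.Icc (0 : ℝ) 1) ∧ (∑ v, x' v) = 1 ∧
      finalSet wt θ x' = Finset.univ) := by
  intro wt θ
  have hnp : (0 : ℝ) < (n : ℝ) + 1 := by positivity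
  have hnR : (2 : ℝ) ≤ (n : ℝ) := by exact_mod_cast hn
  have hwt_nonneg : ∀ u v, 0 ≤ wt u v := by
    intro u v; simp only [wt]; split <;> positivity
  have hsum_nonneg : ∀ (S : Finset (Fin n)) v, 0 ≤ ∑ u ∈ S, wt u v :=
    fun S v => Finset.sum_nonneg fun u _ => hwt_nonneg u v
  have hsum_le : ∀ (S : Finset (Fin n)) v, ∑ u ∈ S, wt u v ≤ 1 / (n + 1) :=
    fun S v => sum_wt_le n S v
  have hcard : Fintype.card (Fin n) ≠ 0 := by simp; omega
  have hθ1 : (2 : ℝ) / (n + 1) ≤ 1 := by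
    rw [div_le_one hnp]; linarith
  have hθpos : (0 : ℝ) < 2 / (n + 1) := by positivity
  -- Part 1
  have hT : finalSet wt θ x = Finset.univ.filter (fun v => x v = 1) := by
    apply finalSet_eq_of_fixed wt θ x _ hcard
    · ext v
      simp only [Finset.mem_union, Finset.notMem_empty, false_or, Finset.mem_filter,
        Finset.mem_univ, true_and, Finset.sum_empty, zero_add]
      constructor
      · intro h
        rcases hx v with h0 | h1
        · exfalso; rw [h0] at h; simp only [θ] at h; linarith
        · exact h1
      · intro h; rw [h]; exact hθ1
    · ext v
      simp only [Finset.mem_union, Finset.mem_filter, Finset.mem_univ, true_and]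
      constructor
      · rintro (h | hv)
        · exact h
        · rcases hx v with h0 | h1
          · exfalso
            have hle := hsum_le (Finset.univ.filter (fun v => x v = 1)) v
            rw [h0, add_zero] at hv
            simp only [θ] at hv
            have : (1 : ℝ) / (n + 1) < 2 / (n + 1) := by
              gcongr
              norm_num
            linarith
          · exact h1
      · exact fun h => Or.inl h
  refine ⟨hT, ?_, ?_⟩
  · -- Part 2
    intro hsum
    rw [hT]
    have hcast : ((Finset.univ.filter (fun v => x v = 1)).card : ℝ) ≤ 1 := by
      have : (∑ v, x v) = ((Finset.univ.filter (fun v => x v = 1)).card : ℝ) := by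
        rw [← Finset.sum_boole]
        apply Finset.sum_congr rfl
        intro v _
        rcases hx v with h0 | h1
        · rw [h0]; simp [h0]
        · rw [h1]; simp [h1]
      linarith
    exact_mod_cast hcast
  · -- Part 3
    set x' : Fin n → ℝ := fun v => if (v : ℕ) = 0 then 2 / (n + 1) else 1 / (n + 1) with hx'
    refine ⟨x', ?_, ?_, ?_⟩
    · intro v
      constructor
      · simp only [x']; split <;> positivity
      · simp only [x']; split
        · exact hθ1
        · rw [div_le_one hnp]; linarith
    · have : ∀ v : Fin n, x' v = 1 / ((n : ℝ) + 1) +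
          (if (v : ℕ) = 0 then 1 / ((n : ℝ) + 1) else (0 : ℝ)) := by
        intro v; simp only [x']; split <;> ring
      rw [Finset.sum_congr rfl (fun v _ => this v), Finset.sum_add_distrib]
      have h0 : (∑ v : Fin n, (if (v : ℕ) = 0 then 1 / ((n : ℝ) + 1) else (0 : ℝ)))
          = 1 / ((n : ℝ) + 1) := by
        rw [← Finset.sum_filter]
        have : Finset.univ.filter (fun v : Fin n => (v : ℕ) = 0) = {⟨0, by omega⟩} := by
          ext v
          simp only [Finset.mem_filter, Finset.mem_univ, true_and, Finset.mem_singleton]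
          constructor
          · intro h; exact Fin.ext h
          · intro h; rw [h]
        rw [this, Finset.sum_singleton]
      rw [h0, Finset.sum_const, Finset.card_univ, Fintype.card_fin, nsmul_eq_mul]
      field_simp
    · -- all vertices activate
      apply finalSet_eq_univ_of_level wt θ x' (fun v => (v : ℕ))
      · intro v; rw [Fintype.card_fin]; exact v.isLt
      · intro S v hS
        by_cases h0 : (v : ℕ) = 0
        · have hxv : x' v = 2 / (n + 1) := by simp [x', h0]
          rw [hxv]
          simp only [θ]
          have := hsum_nonneg S v
          linarith
        · have hv1 : 1 ≤ (v : ℕ) := by omega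
          set u : Fin n := ⟨(v : ℕ) - 1, by omega⟩ with hu
          have hum : u ∈ S := hS u (by simp [hu]; omega)
          have hwuv : wt u v = 1 / (n + 1) := by
            simp only [wt, hu]
            rw [if_pos]; omega
          have hsge : 1 / ((n : ℝ) + 1) ≤ ∑ w ∈ S, wt w v := by
            rw [← hwuv]
            exact Finset.single_le_sum (fun w _ => hwt_nonneg w v) hum
          have hxv : x' v = 1 / (n + 1) := by simp [x', h0]
          rw [hxv]
          simp only [θ]
          have : (2 : ℝ) / (n + 1) = 1 / (n + 1) + 1 / (n + 1) := by ring
          linarith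
end

section
/- Let G = (V, E) be a directed acyclic graph with edge weights defining a linear influence instance, with thresholds i.i.d. Uniform[0,1] and objective σ(x) = E_θ[|S_n^θ|]. For an influence vector x ∈ [0,1]^V define I(x) = {v : x_v > 0} and Sat(x) = {v : x_v + Σ_{u∈δ⁻(v)} w_{uv} > 1}. If G contains no directed path with at least one edge from an element of I(x) to an element of Sat(x), and Sat(x) ∩ I(x) contains no vertex forming such a conflict (i.e., the only possible paths from I(x) to Sat(x) are trivial), then σ(x) = Σ_{v∈V} x_v · σ(1_v), where 1_v is the characteristic vector of {v}. -/
open MeasureTheory Finset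
open scoped Classical

/-- The expected size of the final activated set of the linear influence process,
the thresholds being i.i.d. `Uniform [0,1]`. -/
noncomputable def sigmaLin {W : Type*} [Fintype W] (wt : W → W → ℝ) (x : W → ℝ) : ℝ :=
  ∫ θ : W → ℝ, ((finalSet wt θ x).card : ℝ)
    ∂(Measure.pi fun _ : W => volume.restrict (Set.Icc 0 1))

namespace Finset

theorem sum_eq_sum_of_mem_iff {α M : Type*} [AddCommMonoid M] {g : α → M} {s t : Finset α}
    (h : ∀ a, g a ≠ 0 → (a ∈ s ↔ a ∈ t)) : ∑ a ∈ s, g a = ∑ a ∈ t, g a := by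
  rw [← sum_filter_ne_zero s, ← sum_filter_ne_zero t]
  congr 1
  ext a
  simp only [mem_filter]
  exact ⟨fun ⟨has, ha⟩ => ⟨(h a ha).1 has, ha⟩, fun ⟨hat, ha⟩ => ⟨(h a ha).2 hat, ha⟩⟩

theorem sum_mem_eq_sum_indicator {ι β M : Type*} [Fintype ι] [AddCommMonoid M]
    (A : β → Finset ι) (g : ι → M) (b : β) :
    ∑ i ∈ A b, g i = ∑ i, {b' | i ∈ A b'}.indicator (fun _ => g i) b := by
  simp only [Set.indicator_apply, Set.mem_ofPred_eq]
  rw [sum_ite_mem, univ_inter]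

variable {α : Type*} [Fintype α] {f : Finset α → Finset α}

theorem isFixedPt_iterate_card_empty (hf : ∀ s, s ⊆ f s) :
    Function.IsFixedPt f (f^[Fintype.card α] ∅) := by
  suffices h : ∀ k, Function.IsFixedPt f (f^[k] ∅) ∨ k ≤ #(f^[k] ∅) by
    rcases h (Fintype.card α) with h | h
    · exact h
    · rw [eq_univ_of_card _ (le_antisymm (card_le_univ _) h)]
      exact (subset_univ _).antisymm (hf _)
  intro k
  induction k with
  | zero => exact Or.inr (Nat.zero_le _)
  | succ k ih =>
    rw [Function.iterate_succ_apply']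
    by_cases hfix : Function.IsFixedPt f (f^[k] ∅)
    · exact Or.inl (by rw [hfix]; exact hfix)
    · refine Or.inr (ih.resolve_left hfix |>.trans_lt (card_lt_card ?_))
      exact (hf _).ssubset_of_ne (Ne.symm hfix)

theorem iterate_empty_subset_iterate_card (hf : ∀ s, s ⊆ f s) (k : ℕ) :
    f^[k] ∅ ⊆ f^[Fintype.card α] ∅ := by
  rcases le_total k (Fintype.card α) with hk | hk
  · exact Function.monotone_iterate_of_id_le hf hk ∅
  · obtain ⟨j, rfl⟩ := Nat.exists_eq_add_of_le hk
    rw [add_comm, Function.iterate_add_apply,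
      Function.iterate_fixed (isFixedPt_iterate_card_empty hf)]

end Finset

theorem measurable_sum_mem {ι α : Type*} [Fintype ι] [MeasurableSpace α]
    {A : α → Finset ι}
    (hA : ∀ u, MeasurableSet {a | u ∈ A a}) (g : ι → ℝ) :
    Measurable fun a => ∑ u ∈ A a, g u := by
  simp_rw [sum_mem_eq_sum_indicator A]
  exact Finset.measurable_sum _ fun u _ => measurable_const.indicator (hA u)

theorem Relation.TransGen.lt_of_forall_lt {α β : Type*} [Preorder β] {rel : α → α → Prop}
    (f : α → β) (h : ∀ a b, rel a b → f a < f b) {a b : α} (hab : Relation.TransGen rel a b) :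
    f a < f b := by
  simpa [Relation.transGen_eq_self] using Relation.TransGen.lift f h _ _ hab

section TriangularRecursion

variable {V R : Type*} [Fintype V] {w : V → V → R} {r : V → ℕ}

theorem eq_of_forall_eq_add_sum [NonUnitalNonAssocSemiring R]
    (hdag : ∀ u v, w u v ≠ 0 → r u < r v) {y p q : V → R}
    (hp : ∀ v, p v = y v + ∑ u, w u v * p u) (hq : ∀ v, q v = y v + ∑ u, w u v * q u) :
    p = q := by
  funext v
  induction v using (measure r).wf.induction with
  | _ v ih =>
    rw [hp, hq]
    congr 1
    refine sum_congr rfl fun u _ => ?_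
    by_cases hu : w u v = 0
    · simp [hu]
    · rw [ih u (hdag u v hu)]

theorem eq_sum_mul_of_forall_eq_add_sum {ι : Type*} [Fintype ι] [CommSemiring R]
    (hdag : ∀ u v, w u v ≠ 0 → r u < r v) {c : ι → R} {y : ι → V → R} {p : V → R}
    {q : ι → V → R} (hp : ∀ v, p v = ∑ i, c i * y i v + ∑ u, w u v * p u)
    (hq : ∀ i v, q i v = y i v + ∑ u, w u v * q i u) :
    p = fun v => ∑ i, c i * q i v := by
  refine eq_of_forall_eq_add_sum hdag hp fun v => ?_
  simp only [hq _ v, mul_add, sum_add_distrib, mul_sum]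
  rw [sum_comm]
  simp only [mul_left_comm]

end TriangularRecursion

theorem volume_restrict_Icc_Iic (a b c : ℝ) :
    volume.restrict (Set.Icc a b) (Set.Iic c) = ENNReal.ofReal (min c b - a) := by
  have h : Set.Iic c ∩ Set.Icc a b = Set.Icc a (min c b) := by
    ext t
    simp only [Set.mem_inter_iff, Set.mem_Iic, Set.mem_Icc, le_min_iff]
    tauto
  rw [Measure.restrict_apply measurableSet_Iic, h, Real.volume_Icc]

namespace LinearInfluence

variable {V : Type*} [Fintype V]

instance : IsProbabilityMeasure (volume.restrict (Set.Icc (0 : ℝ) 1)) :=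
  ⟨by simp [Real.volume_Icc]⟩

noncomputable def thresholdMeasure (V : Type*) [Fintype V] : Measure (V → ℝ) :=
  Measure.pi fun _ : V => volume.restrict (Set.Icc 0 1)

instance : IsProbabilityMeasure (thresholdMeasure V) := by
  unfold thresholdMeasure; infer_instance

noncomputable def activationStep (w : V → V → ℝ) (θ x : V → ℝ) (S : Finset V) : Finset V :=
  S ∪ univ.filter fun v => θ v ≤ (∑ u ∈ S, w u v) + x v

noncomputable def activationProb (w : V → V → ℝ) (x : V → ℝ) (v : V) : ℝ :=
  (thresholdMeasure V).real {θ | v ∈ finalSet w θ x}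

variable {w : V → V → ℝ} {x : V → ℝ}

theorem subset_activationStep (θ : V → ℝ) (S : Finset V) : S ⊆ activationStep w θ x S :=
  subset_union_left

theorem finalSet_eq_iterate (θ : V → ℝ) :
    finalSet w θ x = (activationStep w θ x)^[Fintype.card V] ∅ := rfl

theorem mem_finalSet_iff (hw0 : ∀ u v, 0 ≤ w u v) (θ : V → ℝ) (v : V) :
    v ∈ finalSet w θ x ↔ θ v ≤ (∑ u ∈ finalSet w θ x, w u v) + x v := by
  have hsub := subset_activationStep (w := w) (x := x) θ
  refine ⟨fun hv => ?_, fun hv => ?_⟩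
  · suffices h : ∀ k, v ∈ (activationStep w θ x)^[k] ∅ →
        θ v ≤ (∑ u ∈ finalSet w θ x, w u v) + x v from h _ hv
    intro k hk
    induction k with
    | zero => simp at hk
    | succ k ih =>
      rw [Function.iterate_succ_apply', activationStep, mem_union, mem_filter] at hk
      refine hk.elim ih fun hk => hk.2.trans (add_le_add_left ?_ _)
      exact sum_le_sum_of_subset_of_nonneg (iterate_empty_subset_iterate_card hsub k)
        fun u _ _ => hw0 u v
  · rw [finalSet_eq_iterate, ← isFixedPt_iterate_card_empty hsub]
    exact mem_union_right _ (mem_filter.2 ⟨mem_univ v, hv⟩)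

theorem mem_finalSet_congr (hw0 : ∀ u v, 0 ≤ w u v) {r : V → ℕ}
    (hdag : ∀ u v, w u v ≠ 0 → r u < r v) {θ θ' : V → ℝ} (v : V)
    (h : ∀ s, r s ≤ r v → θ s = θ' s) : v ∈ finalSet w θ x ↔ v ∈ finalSet w θ' x := by
  induction v using (measure r).wf.induction with
  | _ v ih =>
    rw [mem_finalSet_iff hw0, mem_finalSet_iff hw0, h v le_rfl,
      sum_eq_sum_of_mem_iff fun u hu => ih u (hdag u v hu) fun s hs =>
        h s (hs.trans (hdag u v hu).le)]

theorem sum_weight_finalSet_update (hw0 : ∀ u v, 0 ≤ w u v) {r : V → ℕ}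
    (hdag : ∀ u v, w u v ≠ 0 → r u < r v) (θ : V → ℝ) (v : V) (t : ℝ) :
    ∑ u ∈ finalSet w (Function.update θ v t) x, w u v = ∑ u ∈ finalSet w θ x, w u v :=
  sum_eq_sum_of_mem_iff fun u hu => mem_finalSet_congr hw0 hdag u fun s hs =>
    Function.update_of_ne (by rintro rfl; exact absurd (hdag u s hu) hs.not_gt) _ _

theorem measurableSet_setOf_mem_finalSet (v : V) :
    MeasurableSet {θ : V → ℝ | v ∈ finalSet w θ x} := by
  suffices h : ∀ k v, MeasurableSet {θ : V → ℝ | v ∈ (activationStep w θ x)^[k] ∅} from h _ v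
  intro k
  induction k with
  | zero => simp
  | succ k ih =>
    intro v
    simp only [Function.iterate_succ_apply', activationStep, mem_union, mem_filter, mem_univ,
      true_and, Set.ofPred_or]
    exact (ih v).union
      (measurableSet_le (measurable_pi_apply v) ((measurable_sum_mem ih _).add_const _))

theorem activationProb_eq_integral_min (hw0 : ∀ u v, 0 ≤ w u v) {r : V → ℕ}
    (hdag : ∀ u v, w u v ≠ 0 → r u < r v) {v : V} (hx0 : 0 ≤ x v) :
    activationProb w x v =
      ∫ θ, min ((∑ u ∈ finalSet w θ x, w u v) + x v) 1 ∂thresholdMeasure V := by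
  set c : (V → ℝ) → ℝ := fun θ => (∑ u ∈ finalSet w θ x, w u v) + x v with hc_def
  have hc0 : ∀ θ, 0 ≤ c θ := fun θ => add_nonneg (sum_nonneg fun u _ => hw0 u v) hx0
  have hc_meas : Measurable c :=
    (measurable_sum_mem (fun u => measurableSet_setOf_mem_finalSet u) _).add_const _
  have hc_update : ∀ θ t, c (Function.update θ v t) = c θ := fun θ t => by
    simp only [hc_def, sum_weight_finalSet_update hw0 hdag]
  have hact := measurableSet_setOf_mem_finalSet (w := w) (x := x) v
  have hlintegral : thresholdMeasure V {θ | v ∈ finalSet w θ x} =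
      ∫⁻ θ, ENNReal.ofReal (min (c θ) 1) ∂thresholdMeasure V := by
    rw [← lintegral_indicator_one hact, thresholdMeasure]
    refine lintegral_eq_of_lmarginal_eq {v} (measurable_one.indicator hact)
      (ENNReal.measurable_ofReal.comp (hc_meas.min measurable_const)) ?_
    rw [lmarginal_singleton, lmarginal_singleton]
    funext θ
    calc ∫⁻ t, {θ | v ∈ finalSet w θ x}.indicator 1 (Function.update θ v t)
          ∂volume.restrict (Set.Icc 0 1)
        = ∫⁻ t, (Set.Iic (c θ)).indicator 1 t ∂volume.restrict (Set.Icc 0 1) := by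
          congr 1
          funext t
          simp only [Set.indicator_apply, Set.mem_ofPred_eq, mem_finalSet_iff hw0,
            Function.update_self, Set.mem_Iic]
          rw [← hc_update θ t]
          rfl
      _ = ENNReal.ofReal (min (c θ) 1) := by
          rw [lintegral_indicator_one measurableSet_Iic, volume_restrict_Icc_Iic, sub_zero]
      _ = ∫⁻ t, ENNReal.ofReal (min (c (Function.update θ v t)) 1)
          ∂volume.restrict (Set.Icc 0 1) := by
          simp only [hc_update, lintegral_const, measure_univ, mul_one]
  rw [activationProb, measureReal_def, hlintegral, integral_eq_lintegral_of_nonneg_ae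
    (ae_of_all _ fun θ => le_min (hc0 θ) zero_le_one)
    (hc_meas.min measurable_const).aestronglyMeasurable]

theorem activationProb_eq_of_ae_le_one (hw0 : ∀ u v, 0 ≤ w u v) {r : V → ℕ}
    (hdag : ∀ u v, w u v ≠ 0 → r u < r v) {v : V} (hx0 : 0 ≤ x v)
    (hle : ∀ᵐ θ ∂thresholdMeasure V, (∑ u ∈ finalSet w θ x, w u v) + x v ≤ 1) :
    activationProb w x v = x v + ∑ u, w u v * activationProb w x u := by
  have hact : ∀ u, MeasurableSet {θ : V → ℝ | u ∈ finalSet w θ x} :=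
    fun u => measurableSet_setOf_mem_finalSet u
  rw [activationProb_eq_integral_min hw0 hdag hx0,
    integral_congr_ae (hle.mono fun θ hθ => min_eq_left hθ)]
  simp_rw [sum_mem_eq_sum_indicator (fun θ => finalSet w θ x)]
  rw [integral_add (integrable_finsetSum _ fun u _ => (integrable_const _).indicator (hact u))
    (integrable_const _), integral_finsetSum _ fun u _ => (integrable_const _).indicator (hact u),
    integral_const, probReal_univ, one_smul, add_comm]
  simp only [integral_indicator_const _ (hact _), smul_eq_mul, mul_comm, activationProb]

theorem activationProb_eq_zero (hw0 : ∀ u v, 0 ≤ w u v) (hw1 : ∀ v, ∑ u, w u v ≤ 1)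
    {r : V → ℕ} (hdag : ∀ u v, w u v ≠ 0 → r u < r v) (hx0 : ∀ v, 0 ≤ x v) {v : V}
    (h : ∀ s, Relation.ReflTransGen (fun a b => w a b ≠ 0) s v → x s = 0) :
    activationProb w x v = 0 := by
  induction v using (measure r).wf.induction with
  | _ v ih =>
    have hle : ∀ θ : V → ℝ, (∑ u ∈ finalSet w θ x, w u v) + x v ≤ 1 := fun θ => by
      rw [h v .refl, add_zero]
      exact (sum_le_univ_sum_of_nonneg fun u => hw0 u v).trans (hw1 v)
    rw [activationProb_eq_of_ae_le_one hw0 hdag (hx0 v) (ae_of_all _ hle), h v .refl, zero_add]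
    refine sum_eq_zero fun u _ => ?_
    by_cases hu : w u v = 0
    · rw [hu, zero_mul]
    · rw [ih u (hdag u v hu) fun s hs => h s (hs.tail hu), mul_zero]

def NoPathToSaturated (w : V → V → ℝ) (x : V → ℝ) : Prop :=
  ∀ u v, 0 < x u → 1 < x v + ∑ t, w t v → ¬ Relation.TransGen (fun a b => w a b ≠ 0) u v

theorem activationProb_eq_add_sum (hw0 : ∀ u v, 0 ≤ w u v) (hw1 : ∀ v, ∑ u, w u v ≤ 1)
    {r : V → ℕ} (hdag : ∀ u v, w u v ≠ 0 → r u < r v) (hx : ∀ v, x v ∈ Set.Icc (0 : ℝ) 1)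
    (hpath : NoPathToSaturated w x) (v : V) :
    activationProb w x v = x v + ∑ u, w u v * activationProb w x u := by
  refine activationProb_eq_of_ae_le_one hw0 hdag (hx v).1 ?_
  by_cases hsat : x v + ∑ t, w t v ≤ 1
  · refine ae_of_all _ fun θ => ?_
    linarith [sum_le_univ_sum_of_nonneg (s := finalSet w θ x) fun u => hw0 u v]
  have hnull : ∀ u, w u v ≠ 0 → activationProb w x u = 0 := fun u hu =>
    activationProb_eq_zero hw0 hw1 hdag (fun s => (hx s).1) fun s hs =>
      (hx s).1.eq_or_lt.elim Eq.symm fun hpos =>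
        absurd (Relation.TransGen.tail' hs hu) (hpath s v hpos (not_le.1 hsat))
  have hinactive : ∀ᵐ θ ∂thresholdMeasure V, ∀ u, w u v ≠ 0 → u ∉ finalSet w θ x := by
    refine ae_all_iff.2 fun u => ?_
    by_cases hu : w u v = 0
    · exact ae_of_all _ fun _ h => absurd hu h
    · have h := hnull u hu
      rw [activationProb, measureReal_eq_zero_iff] at h
      exact (measure_eq_zero_iff_ae_notMem.1 h).mono fun _ hθ _ => hθ
  filter_upwards [hinactive] with θ hθ
  rw [sum_eq_zero fun u hu => not_not.1 fun hw => hθ u hw hu, zero_add]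
  exact (hx v).2

theorem noPathToSaturated_indicator [DecidableEq V] (hw1 : ∀ v, ∑ u, w u v ≤ 1) {r : V → ℕ}
    (hdag : ∀ u v, w u v ≠ 0 → r u < r v) (t : V) :
    NoPathToSaturated w fun u => if u = t then 1 else 0 := by
  intro u v hu hv huv
  obtain rfl : u = t := by by_contra h; simp [h] at hu
  obtain rfl : v = u := by by_contra h; simp only [h, if_false, zero_add] at hv; linarith [hw1 v]
  exact lt_irrefl _ (huv.lt_of_forall_lt r hdag)

theorem sigmaLin_eq_sum_activationProb (w : V → V → ℝ) (x : V → ℝ) :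
    sigmaLin w x = ∑ v, activationProb w x v := by
  have hact : ∀ v, MeasurableSet {θ : V → ℝ | v ∈ finalSet w θ x} :=
    fun v => measurableSet_setOf_mem_finalSet v
  change ∫ θ, ((finalSet w θ x).card : ℝ) ∂thresholdMeasure V = _
  simp_rw [card_eq_sum_ones, Nat.cast_sum, Nat.cast_one,
    sum_mem_eq_sum_indicator (fun θ => finalSet w θ x)]
  rw [integral_finsetSum _ fun v _ => (integrable_const _).indicator (hact v)]
  simp only [integral_indicator_const _ (hact _), smul_eq_mul, mul_one, activationProb]

end LinearInfluence

open LinearInfluence in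
/-- On a DAG (witnessed by a rank function `r` increasing along edges), if there is
no directed path (with at least one edge) from an influenced vertex (`0 < x u`) to an
over-saturated vertex (`1 < x v + ∑_u w u v`), then the objective is linear:
`σ(x) = ∑_v x_v σ(1_v)`. -/
theorem stmt10 {V : Type*} [Fintype V] [DecidableEq V]
    (w : V → V → ℝ) (hw0 : ∀ u v, 0 ≤ w u v) (hw1 : ∀ v, (∑ u, w u v) ≤ 1)
    (r : V → ℕ) (hdag : ∀ u v, w u v ≠ 0 → r u < r v)
    (x : V → ℝ) (hx : ∀ v, x v ∈ Set.Icc (0 : ℝ) 1)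
    (hpath : ∀ u v, 0 < x u → 1 < x v + (∑ t, w t v) →
      ¬ Relation.TransGen (fun a b : V => w a b ≠ 0) u v) :
    sigmaLin w x = ∑ v, x v * sigmaLin w (fun u => if u = v then 1 else 0) := by
  set e : V → V → ℝ := fun t u => if u = t then 1 else 0
  have he : ∀ t v, e t v ∈ Set.Icc (0 : ℝ) 1 := fun t v => by
    by_cases h : v = t <;> simp [e, h]
  have hlin : activationProb w x = fun v => ∑ t, x t * activationProb w (e t) v := by
    refine eq_sum_mul_of_forall_eq_add_sum hdag (fun v => ?_) fun t =>
      activationProb_eq_add_sum hw0 hw1 hdag (he t) (noPathToSaturated_indicator hw1 hdag t)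
    rw [activationProb_eq_add_sum hw0 hw1 hdag hx hpath v]
    simp [e]
  rw [sigmaLin_eq_sum_activationProb, hlin, sum_comm]
  simp only [sigmaLin_eq_sum_activationProb, mul_sum, e]
end

section
/- Let G = (V, E) be a directed acyclic graph defining a linear influence instance, let s ∈ V be a source (in-degree 0), let x ∈ [0,1]^V satisfy x_v + w_{sv} ≤ 1 for every out-neighbor v of s, and fix a threshold vector θ with x_s ≥ θ_s. Let Ĝ = G − s, let x̂ be the restriction of x to V∖{s}, and let ŷ be defined by ŷ_v = w_{sv} for out-neighbors v of s and ŷ_v = 0 otherwise. Let S_i^θ and Ŝ_i^θ be the sets activated after i steps in G under x and in Ĝ under x̂ + ŷ respectively. Then for every i = 0, 1, …, n−1 one has S_i^θ ∖ {s} ⊆ Ŝ_i^θ ⊆ S_{i+1}^θ ∖ {s}, and the final activated sets satisfy S_n^θ = Ŝ_{n}^θ ∪ {s}. -/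
open Finset
open scoped Classical

private lemma stab_aux {α : Type*} [Fintype α] [DecidableEq α]
    (f : Finset α → Finset α) (h : ∀ S, S ⊆ f S) :
    f^[Fintype.card α + 1] ∅ = f^[Fintype.card α] ∅ := by
  have main : ∀ n : ℕ, n ≤ (f^[n] ∅).card ∨ f^[n+1] ∅ = f^[n] ∅ := by
    intro n
    induction n with
    | zero => left; exact Nat.zero_le _
    | succ n ih =>
      rcases ih with hcard | heq
      · by_cases he : f^[n+1] ∅ = f^[n] ∅
        · right
          rw [Function.iterate_succ_apply'] at he
          rw [Function.iterate_succ_apply' f (n+1), Function.iterate_succ_apply' f n, he]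
          exact he
        · left
          have hsub : f^[n] ∅ ⊆ f^[n+1] ∅ := by
            rw [Function.iterate_succ_apply']; exact h _
          have : (f^[n] ∅).card < (f^[n+1] ∅).card :=
            Finset.card_lt_card (Finset.ssubset_iff_subset_ne.mpr ⟨hsub, Ne.symm he⟩)
          omega
      · right
        rw [Function.iterate_succ_apply'] at heq
        rw [Function.iterate_succ_apply' f (n+1), Function.iterate_succ_apply' f n, heq]
        exact heq
  rcases main (Fintype.card α) with hcard | heq
  · have huniv : f^[Fintype.card α] ∅ = Finset.univ := by
      apply Finset.eq_univ_of_card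
      exact le_antisymm (Finset.card_le_univ _) hcard
    have hsub : f^[Fintype.card α] ∅ ⊆ f^[Fintype.card α + 1] ∅ := by
      rw [Function.iterate_succ_apply']; exact h _
    refine (Finset.eq_of_subset_of_card_le hsub ?_).symm
    rw [huniv, Finset.card_univ]
    exact Finset.card_le_univ _
  · exact heq

/-- Removing a source `s` from a DAG when `θ s ≤ x s` and `x v + w s v ≤ 1` for all
out-neighbors `v` of `s`: the deterministic linear influence process in `G` under `x`
and the one in `Ĝ = G - s` under `x̂ + ŷ` (where `ŷ_v = w s v`) are interleaved,
`S_i ∖ {s} ⊆ Ŝ_i ⊆ S_{i+1} ∖ {s}` for `i = 0, …, n-1`, and the final activated sets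
satisfy `S_n = Ŝ_n ∪ {s}`. -/
theorem stmt13 {V : Type*} [Fintype V] [DecidableEq V]
    (w : V → V → ℝ) (hw0 : ∀ u v, 0 ≤ w u v) (hw1 : ∀ v, (∑ u, w u v) ≤ 1)
    (r : V → ℕ) (hdag : ∀ u v, w u v ≠ 0 → r u < r v)
    (s : V) (hs : ∀ u, w u s = 0)
    (x : V → ℝ) (hx : ∀ v, x v ∈ Set.Icc (0 : ℝ) 1)
    (hcap : ∀ v, v ≠ s → x v + w s v ≤ 1)
    (θ : V → ℝ) (hθs : θ s ≤ x s) :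
    let step : Finset V → Finset V :=
      fun S => S ∪ Finset.univ.filter (fun v => θ v ≤ (∑ u ∈ S, w u v) + x v)
    let step' : Finset {v : V // v ≠ s} → Finset {v : V // v ≠ s} :=
      fun S => S ∪ Finset.univ.filter
        (fun v => θ v.val ≤ (∑ u ∈ S, w u.val v.val) + (x v.val + w s v.val))
    (∀ i ≤ Fintype.card V - 1,
      (step^[i] ∅).erase s ⊆ (step'^[i] ∅).image Subtype.val ∧
      (step'^[i] ∅).image Subtype.val ⊆ (step^[i + 1] ∅).erase s) ∧
    step^[Fintype.card V] ∅ = insert s ((step'^[Fintype.card V] ∅).image Subtype.val) := by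
  intro step step'
  have hmono : ∀ S, S ⊆ step S := fun S => Finset.subset_union_left
  have hmono' : ∀ S, S ⊆ step' S := fun S => Finset.subset_union_left
  have hsin : ∀ S, s ∈ step S := by
    intro S
    apply Finset.mem_union_right
    simp only [Finset.mem_filter, Finset.mem_univ, true_and]
    have hz : (∑ u ∈ S, w u s) = 0 := Finset.sum_eq_zero (fun u _ => hs u)
    rw [hz]; linarith
  -- sum over image equals sum over subtype finset
  have himg : ∀ (T : Finset {v : V // v ≠ s}) (v : V),
      (∑ u ∈ T.image Subtype.val, w u v) = ∑ u ∈ T, w u.val v := by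
    intro T v
    rw [Finset.sum_image (fun a _ b _ h => Subtype.val_injective h)]
  have hsnotimg : ∀ (T : Finset {v : V // v ≠ s}), s ∉ T.image Subtype.val := by
    intro T hmem
    rcases Finset.mem_image.mp hmem with ⟨u, _, hu⟩
    exact u.2 hu
  have key : ∀ i : ℕ,
      (step^[i] ∅).erase s ⊆ (step'^[i] ∅).image Subtype.val ∧
      (step'^[i] ∅).image Subtype.val ⊆ (step^[i + 1] ∅).erase s := by
    intro i
    induction i with
    | zero =>
      refine ⟨by simp, by simp⟩
    | succ i ih =>
      obtain ⟨ihA, ihB⟩ := ih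
      have hsum_key : ∀ v : V, (∑ u ∈ step^[i] ∅, w u v)
          ≤ (∑ u ∈ step'^[i] ∅, w u.val v) + w s v := by
        intro v
        have hsub : step^[i] ∅ ⊆ insert s ((step'^[i] ∅).image Subtype.val) := by
          intro u hu
          by_cases hus : u = s
          · rw [hus]; exact Finset.mem_insert_self s _
          · exact Finset.mem_insert_of_mem (ihA (Finset.mem_erase.mpr ⟨hus, hu⟩))
        calc (∑ u ∈ step^[i] ∅, w u v)
            ≤ ∑ u ∈ insert s ((step'^[i] ∅).image Subtype.val), w u v :=
              Finset.sum_le_sum_of_subset_of_nonneg hsub (fun u _ _ => hw0 u v)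
          _ = w s v + ∑ u ∈ (step'^[i] ∅).image Subtype.val, w u v :=
              Finset.sum_insert (hsnotimg _)
          _ = (∑ u ∈ step'^[i] ∅, w u.val v) + w s v := by rw [himg]; ring
      constructor
      · -- A at i+1
        intro v hv
        rw [Finset.mem_erase] at hv
        obtain ⟨hvs, hv⟩ := hv
        rw [Function.iterate_succ_apply'] at hv
        rw [Function.iterate_succ_apply']
        rcases Finset.mem_union.mp hv with hv | hv
        · have : v ∈ (step'^[i] ∅).image Subtype.val :=
            ihA (Finset.mem_erase.mpr ⟨hvs, hv⟩)
          exact Finset.image_subset_image (hmono' _) this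
        · rw [Finset.mem_filter] at hv
          have hθv := hv.2
          apply Finset.mem_image.mpr
          refine ⟨⟨v, hvs⟩, ?_, rfl⟩
          apply Finset.mem_union_right
          simp only [Finset.mem_filter, Finset.mem_univ, true_and]
          have := hsum_key v
          linarith
      · -- B at i+1
        intro v hv
        rcases Finset.mem_image.mp hv with ⟨u, hu, rfl⟩
        rw [Function.iterate_succ_apply'] at hu
        rcases Finset.mem_union.mp hu with hu | hu
        · have : (u : V) ∈ (step^[i+1] ∅).erase s :=
            ihB (Finset.mem_image_of_mem _ hu)
          rw [Finset.mem_erase] at this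
          refine Finset.mem_erase.mpr ⟨u.2, ?_⟩
          rw [Function.iterate_succ_apply' step (i+1)]
          exact hmono _ this.2
        · rw [Finset.mem_filter] at hu
          have hθu := hu.2
          refine Finset.mem_erase.mpr ⟨u.2, ?_⟩
          rw [Function.iterate_succ_apply' step (i+1)]
          apply Finset.mem_union_right
          simp only [Finset.mem_filter, Finset.mem_univ, true_and]
          -- insert s (image step'^[i]) ⊆ step^[i+1] ∅
          have hsub : insert s ((step'^[i] ∅).image Subtype.val) ⊆ step^[i+1] ∅ := by
            intro a ha
            rcases Finset.mem_insert.mp ha with ha | ha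
            · subst ha
              rw [Function.iterate_succ_apply']
              exact hsin _
            · exact Finset.mem_erase.mp (ihB ha) |>.2
          have hle : (∑ a ∈ step'^[i] ∅, w a.val u.val) + w s u.val
              ≤ ∑ a ∈ step^[i+1] ∅, w a u.val := by
            calc (∑ a ∈ step'^[i] ∅, w a.val u.val) + w s u.val
                = ∑ a ∈ insert s ((step'^[i] ∅).image Subtype.val), w a u.val := by
                  rw [Finset.sum_insert (hsnotimg _), himg]; ring
              _ ≤ ∑ a ∈ step^[i+1] ∅, w a u.val :=
                  Finset.sum_le_sum_of_subset_of_nonneg hsub (fun a _ _ => hw0 a u.val)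
          linarith
  refine ⟨fun i _ => key i, ?_⟩
  -- final equality
  have hstab : step^[Fintype.card V + 1] ∅ = step^[Fintype.card V] ∅ :=
    stab_aux step hmono
  obtain ⟨A, B⟩ := key (Fintype.card V)
  rw [hstab] at B
  have himgeq : (step'^[Fintype.card V] ∅).image Subtype.val
      = (step^[Fintype.card V] ∅).erase s := le_antisymm B A
  have hsmem : s ∈ step^[Fintype.card V] ∅ := by
    have hpos : 0 < Fintype.card V := Fintype.card_pos_iff.mpr ⟨s⟩
    obtain ⟨m, hm⟩ := Nat.exists_eq_succ_of_ne_zero hpos.ne'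
    rw [hm, Function.iterate_succ_apply']
    exact hsin _
  rw [himgeq, Finset.insert_erase hsmem]
end

section
/- Let G = (V, E) be a finite simple undirected graph with |V| = n and let D(G) be the two-layer DAG with layers L₁ and L₂, all edge weights 1/2 and all fixed thresholds 1/2, constructed from G as follows: L₁ = V, and for each unordered pair {u,v} of distinct vertices, if {u,v} ∈ E one shared L₂-vertex receives edges from u and v, while if {u,v} ∉ E two separate L₂-vertices receive an edge from u and from v respectively. Then for every seed set T ⊆ L₁ ∪ L₂ there exists a seed set S ⊆ L₁ with |S| ≤ |T| and σ(S) ≥ σ(T), where σ denotes the size of the final activated set of the deterministic linear influence process on D(G). -/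
open Finset
open scoped Classical

/-- Vertex set of the two-layer DAG `D(G)` built from a simple graph `G`: the first
layer is `V`; the second layer has one vertex for each edge `{u,v} ∈ E` (with edges
from both `u` and `v` into it) and, for each non-adjacent pair `{u,v}`, two vertices,
one receiving an edge from `u` and one from `v` (encoded by ordered pairs). -/
abbrev TwoLayer {V : Type*} [Fintype V] [DecidableEq V]
    (G : SimpleGraph V) [DecidableRel G.Adj] : Type _ :=
  V ⊕ ({e : Sym2 V // e ∈ G.edgeFinset} ⊕ {p : V × V // p.1 ≠ p.2 ∧ ¬ G.Adj p.1 p.2})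

/-- All edges of `D(G)` have weight `1/2`. -/
noncomputable def dagWeight {V : Type*} [Fintype V] [DecidableEq V]
    (G : SimpleGraph V) [DecidableRel G.Adj] :
    TwoLayer G → TwoLayer G → ℝ
  | Sum.inl u, Sum.inr (Sum.inl e) => if u ∈ e.val then (1 : ℝ) / 2 else 0
  | Sum.inl u, Sum.inr (Sum.inr p) => if u = p.val.1 then (1 : ℝ) / 2 else 0
  | _, _ => 0

/-- The size of the final activated set of the deterministic linear influence
process on `D(G)` (all thresholds `1/2`) started from the seed set `Seed`. -/
noncomputable def sigmaDag {V : Type*} [Fintype V] [DecidableEq V]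
    (G : SimpleGraph V) [DecidableRel G.Adj] (Seed : Finset (TwoLayer G)) : ℕ :=
  (finalSet (dagWeight G) (fun _ => (1 : ℝ) / 2)
    (fun z => if z ∈ Seed then (1 : ℝ) else 0)).card


noncomputable def stepFun {W : Type*} [Fintype W] (wt : W → W → ℝ) (θ x : W → ℝ) :
    Finset W → Finset W :=
  fun S => S ∪ Finset.univ.filter (fun v => θ v ≤ (∑ u ∈ S, wt u v) + x v)

lemma finalSet_eq_iter {W : Type*} [Fintype W] (wt : W → W → ℝ) (θ x : W → ℝ) :
    finalSet wt θ x = (stepFun wt θ x)^[Fintype.card W] ∅ := rfl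

lemma iterStep_subset {W : Type*} (f : Finset W → Finset W)
    (hf : ∀ S, S ⊆ f S) (n : ℕ) : f^[n] ∅ ⊆ f^[n+1] ∅ := by
  rw [Function.iterate_succ_apply']; exact hf _

lemma iter_mono {W : Type*} (f : Finset W → Finset W)
    (hf : ∀ S, S ⊆ f S) {m n : ℕ} (h : m ≤ n) : f^[m] ∅ ⊆ f^[n] ∅ := by
  induction h with
  | refl => exact subset_rfl
  | step h ih => exact ih.trans (iterStep_subset f hf _)

lemma iter_fixed {W : Type*} [Fintype W] [DecidableEq W] (f : Finset W → Finset W)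
    (hf : ∀ S, S ⊆ f S) : f (f^[Fintype.card W] ∅) = f^[Fintype.card W] ∅ := by
  have key : ∀ n, f^[n+1] ∅ = f^[n] ∅ ∨ n ≤ (f^[n] ∅).card := by
    intro n
    induction n with
    | zero => exact Or.inr (Nat.zero_le _)
    | succ n ih =>
      rcases ih with h | h
      · left
        have h' : f (f^[n] ∅) = f^[n] ∅ := by rwa [Function.iterate_succ_apply'] at h
        rw [Function.iterate_succ_apply', Function.iterate_succ_apply', h', h']
      · by_cases heq : f^[n+1] ∅ = f^[n] ∅
        · left
          have h' : f (f^[n] ∅) = f^[n] ∅ := by rwa [Function.iterate_succ_apply'] at heq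
          rw [Function.iterate_succ_apply', Function.iterate_succ_apply', h', h']
        · right
          have hss : f^[n] ∅ ⊂ f^[n+1] ∅ :=
            ⟨iterStep_subset f hf n, fun h2 => heq (subset_antisymm h2 (iterStep_subset f hf n))⟩
          have := Finset.card_lt_card hss
          omega
  rcases key (Fintype.card W) with h | h
  · rwa [Function.iterate_succ_apply'] at h
  · have hle : (f^[Fintype.card W] ∅).card ≤ Fintype.card W := by
      simpa using Finset.card_le_univ (f^[Fintype.card W] ∅)
    have huniv : f^[Fintype.card W] ∅ = Finset.univ :=
      Finset.eq_univ_of_card _ (le_antisymm hle h)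
    rw [huniv]
    exact subset_antisymm (Finset.subset_univ _) (hf _)

lemma finalSet_dominate {W : Type*} [Fintype W] (wt : W → W → ℝ)
    (hw : ∀ u v, 0 ≤ wt u v) (T Q : Finset W)
    (hkey : ∀ v ∈ T, v ∈ Q ∨ ∃ u ∈ Q, (1:ℝ)/2 ≤ wt u v) :
    finalSet wt (fun _ => (1:ℝ)/2) (fun z => if z ∈ T then (1:ℝ) else 0) ⊆
      finalSet wt (fun _ => (1:ℝ)/2) (fun z => if z ∈ Q then (1:ℝ) else 0) := by
  classical
  set xT : W → ℝ := fun z => if z ∈ T then (1:ℝ) else 0 with hxT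
  set xQ : W → ℝ := fun z => if z ∈ Q then (1:ℝ) else 0 with hxQ
  set θ : W → ℝ := fun _ => (1:ℝ)/2 with hθ
  rw [finalSet_eq_iter, finalSet_eq_iter]
  set N := Fintype.card W with hN
  have hsub : ∀ x : W → ℝ, ∀ S, S ⊆ stepFun wt θ x S := fun x S => Finset.subset_union_left
  set F : Finset W := (stepFun wt θ xQ)^[N] ∅ with hF
  rcases Nat.eq_zero_or_pos N with hc | hc
  · rw [hc]; simp
  have hfix : stepFun wt θ xQ F = F := iter_fixed _ (hsub xQ)
  have hQF : Q ⊆ F := by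
    have hchain : ∀ m n : ℕ, m ≤ n → (stepFun wt θ xQ)^[m] ∅ ⊆ (stepFun wt θ xQ)^[n] ∅ := by
      intro m n h
      induction h with
      | refl => exact subset_rfl
      | step h ih => exact ih.trans (iterStep_subset _ (hsub xQ) _)
    intro v hv
    apply hchain 1 N hc
    simp only [Function.iterate_one, stepFun]
    apply Finset.mem_union_right
    simp only [Finset.mem_filter, Finset.mem_univ, true_and, Finset.sum_empty, hxQ, hθ, hv,
      if_pos, zero_add]
    norm_num
  have hkey' : ∀ v ∈ T, θ v ≤ (∑ u ∈ F, wt u v) + xQ v := by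
    intro v hv
    have hsnn : (0:ℝ) ≤ ∑ u ∈ F, wt u v := Finset.sum_nonneg (fun u _ => hw u v)
    have hθv : θ v = (1:ℝ)/2 := rfl
    rcases hkey v hv with h | ⟨u, huQ, hwu⟩
    · have : xQ v = 1 := by rw [hxQ]; simp [h]
      rw [hθv, this]; linarith
    · have h1 : wt u v ≤ ∑ u' ∈ F, wt u' v :=
        Finset.single_le_sum (fun u' _ => hw u' v) (hQF huQ)
      have hx : (0:ℝ) ≤ xQ v := by rw [hxQ]; dsimp only; split_ifs <;> norm_num
      rw [hθv]; linarith
  have hiter : ∀ n, (stepFun wt θ xT)^[n] ∅ ⊆ F := by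
    intro n
    induction n with
    | zero => simp
    | succ n ih =>
      rw [Function.iterate_succ_apply']
      intro v hv
      rcases Finset.mem_union.mp hv with hv | hv
      · exact ih hv
      · rw [Finset.mem_filter] at hv
        have hcond := hv.2
        rw [← hfix]
        apply Finset.mem_union_right
        rw [Finset.mem_filter]
        refine ⟨Finset.mem_univ _, ?_⟩
        by_cases hvT : v ∈ T
        · exact hkey' v hvT
        · have hxTv : xT v = 0 := by rw [hxT]; simp [hvT]
          rw [hxTv, add_zero] at hcond
          have hmono : (∑ u ∈ (stepFun wt θ xT)^[n] ∅, wt u v) ≤ ∑ u ∈ F, wt u v :=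
            Finset.sum_le_sum_of_subset_of_nonneg ih (fun u _ _ => hw u v)
          have hx : (0:ℝ) ≤ xQ v := by rw [hxQ]; dsimp only; split_ifs <;> norm_num
          calc θ v ≤ ∑ u ∈ (stepFun wt θ xT)^[n] ∅, wt u v := hcond
            _ ≤ (∑ u ∈ F, wt u v) + xQ v := by linarith
  exact hiter N


/-- Seed sets inside the first layer of `D(G)` dominate: for every seed set `T` of
`D(G)` there is a seed set `S ⊆ L₁` with `|S| ≤ |T|` and `σ(T) ≤ σ(S)`. -/
theorem stmt15 {V : Type*} [Fintype V] [DecidableEq V]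
    (G : SimpleGraph V) [DecidableRel G.Adj] (T : Finset (TwoLayer G)) :
    ∃ S : Finset V, S.card ≤ T.card ∧ sigmaDag G T ≤ sigmaDag G (S.image Sum.inl) := by
  classical
  set pick : TwoLayer G → V := fun z =>
    match z with
    | Sum.inl u => u
    | Sum.inr (Sum.inl e) => e.val.out.1
    | Sum.inr (Sum.inr p) => p.val.1
    with hpick
  refine ⟨T.image pick, Finset.card_image_le, ?_⟩
  have hw : ∀ u v : TwoLayer G, 0 ≤ dagWeight G u v := by
    rintro (u | u) (v | (e | p)) <;> simp only [dagWeight] <;>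
      first
      | (split_ifs <;> norm_num)
      | norm_num
  have hkey : ∀ v ∈ T, v ∈ ((T.image pick).image Sum.inl) ∨
      ∃ u ∈ ((T.image pick).image Sum.inl), (1:ℝ)/2 ≤ dagWeight G u v := by
    intro v hv
    match v with
    | Sum.inl u =>
      left
      exact Finset.mem_image_of_mem _ (Finset.mem_image_of_mem _ hv)
    | Sum.inr (Sum.inl e) =>
      right
      refine ⟨Sum.inl e.val.out.1, ?_, ?_⟩
      · exact Finset.mem_image_of_mem _ (Finset.mem_image_of_mem _ hv)
      · simp [dagWeight, Sym2.out_fst_mem]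
    | Sum.inr (Sum.inr p) =>
      right
      refine ⟨Sum.inl p.val.1, ?_, ?_⟩
      · exact Finset.mem_image_of_mem _ (Finset.mem_image_of_mem _ hv)
      · simp [dagWeight]
  simp only [sigmaDag]
  refine Finset.card_le_card ?_
  have h := finalSet_dominate (dagWeight G) hw T ((T.image pick).image Sum.inl) hkey
  convert h using 2 <;> funext z <;> congr
end
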